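/- Let Λ be a left artinian ring and let 𝒳 be a subcategory of Λ-mod. If any family of homomorphisms between indecomposable modules in 𝒳 is both noetherian and artinian, then every non-zero 𝒳-module has a simple subfunctor. -/

import Mathlib

open CategoryTheory Limits

universe u

namespace Paper

/-- `𝒳` is a full additive subcategory of `Λ`-mod, closed under direct summands and
isomorphisms and containing the zero module, encoded as a predicate on `ModuleCat Λ`. -/
structure IsSubcat (Λ : Type u) [Ring Λ] (P : ModuleCat.{u} Λ → Prop) : Prop where
  fg : ∀ M, P M → Module.Finite Λ M
  zero_mem : P (ModuleCat.of Λ PUnit)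
  iso_closed : ∀ {M N : ModuleCat.{u} Λ}, (M ≅ N) → P M → P N
  sum_closed : ∀ {M N : ModuleCat.{u} Λ}, P M → P N → P (ModuleCat.of Λ (M × N))
  summand_closed : ∀ {M N : ModuleCat.{u} Λ}, P N →
    (∃ (i : M ⟶ N) (p : N ⟶ M), i ≫ p = 𝟙 M) → P M

/-- The composite `fᵢ₋₁ ∘ ⋯ ∘ f₀ : X 0 ⟶ X i` of a chain of morphisms. -/
def chainComp {C : Type*} [Category C] {X : ℕ → C} (f : ∀ i, X i ⟶ X (i + 1)) :
    ∀ i, X 0 ⟶ X i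
  | 0 => 𝟙 _
  | (i + 1) => chainComp f i ≫ f i

/-- The composite `g₀ ∘ ⋯ ∘ gᵢ₋₁ : X i ⟶ X 0` of a downward chain of morphisms. -/
def chainCompDown {C : Type*} [Category C] {X : ℕ → C} (g : ∀ i, X (i + 1) ⟶ X i) :
    ∀ i, X i ⟶ X 0
  | 0 => 𝟙 _
  | (i + 1) => g i ≫ chainCompDown g i

/-- Any family of homomorphisms between indecomposable modules in `𝒳` is noetherian. -/
def HomChainsNoetherian {Λ : Type u} [Ring Λ] (P : ModuleCat.{u} Λ → Prop) : Prop :=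
  ∀ X : ℕ → ObjectProperty.FullSubcategory P, (∀ i, Indecomposable (X i).obj) →
    ∀ f : ∀ i, X i ⟶ X (i + 1), (∀ i, chainComp f i ≠ 0) →
      ∃ n, ∀ k, n ≤ k → IsIso (f k)

/-- Any family of homomorphisms between indecomposable modules in `𝒳` is artinian. -/
def HomChainsArtinian {Λ : Type u} [Ring Λ] (P : ModuleCat.{u} Λ → Prop) : Prop :=
  ∀ X : ℕ → ObjectProperty.FullSubcategory P, (∀ i, Indecomposable (X i).obj) →
    ∀ g : ∀ i, X (i + 1) ⟶ X i, (∀ i, chainCompDown g i ≠ 0) →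
      ∃ n, ∀ k, n ≤ k → IsIso (g k)

/-- A subfunctor of an `Ab`-valued functor `F`. -/
structure Subfunctor {D : Type*} [Category D] (F : D ⥤ AddCommGrpCat.{u}) where
  pt : ∀ X : D, AddSubgroup (F.obj X)
  map_mem : ∀ {X Y : D} (f : X ⟶ Y) (x : F.obj X), x ∈ pt X → F.map f x ∈ pt Y

namespace Subfunctor

variable {D : Type*} [Category D] {F : D ⥤ AddCommGrpCat.{u}}

/-- Containment of subfunctors. -/
def le (S T : Subfunctor F) : Prop := ∀ X, S.pt X ≤ T.pt X

/-- A subfunctor of `F` is finitely generated if it is generated by finitely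
many elements. -/
def FG (S : Subfunctor F) : Prop :=
  ∃ (n : ℕ) (X : Fin n → D) (x : ∀ i, F.obj (X i)),
    (∀ i, x i ∈ S.pt (X i)) ∧ ∀ T : Subfunctor F, (∀ i, x i ∈ T.pt (X i)) → S.le T

/-- A subfunctor is noetherian if ascending chains of subfunctors below it stabilize. -/
def Noetherian (S : Subfunctor F) : Prop :=
  ∀ c : ℕ → Subfunctor F, (∀ n, (c n).le S) → (∀ n, (c n).le (c (n + 1))) →
    ∃ n, ∀ k, n ≤ k → (c k).le (c n)

/-- A subfunctor is artinian if descending chains of subfunctors below it stabilize. -/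
def Artinian (S : Subfunctor F) : Prop :=
  ∀ c : ℕ → Subfunctor F, (∀ n, (c n).le S) → (∀ n, (c (n + 1)).le (c n)) →
    ∃ n, ∀ k, n ≤ k → (c n).le (c k)

/-- A subfunctor is finite if it is both noetherian and artinian. -/
def Finite (S : Subfunctor F) : Prop := S.Noetherian ∧ S.Artinian

end Subfunctor

/-- A functor is noetherian if its ascending chains of subfunctors stabilize. -/
def NoetherianFunctor {D : Type*} [Category D] (F : D ⥤ AddCommGrpCat.{u}) : Prop :=
  ∀ c : ℕ → Subfunctor F, (∀ n, (c n).le (c (n + 1))) → ∃ n, ∀ k, n ≤ k → (c k).le (c n)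

/-- A functor is artinian if its descending chains of subfunctors stabilize. -/
def ArtinianFunctor {D : Type*} [Category D] (F : D ⥤ AddCommGrpCat.{u}) : Prop :=
  ∀ c : ℕ → Subfunctor F, (∀ n, (c (n + 1)).le (c n)) → ∃ n, ∀ k, n ≤ k → (c n).le (c k)

/-- A functor is finite if it is both noetherian and artinian. -/
def FiniteFunctor {D : Type*} [Category D] (F : D ⥤ AddCommGrpCat.{u}) : Prop :=
  NoetherianFunctor F ∧ ArtinianFunctor F

/-- A functor is locally finite if every finitely generated subfunctor is finite. -/
def LocallyFiniteFunctor {D : Type*} [Category D] (F : D ⥤ AddCommGrpCat.{u}) : Prop :=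
  ∀ S : Subfunctor F, S.FG → S.Finite

/-- The category of additive functors `D ⥤ Ab` is locally finite. -/
def ModLocallyFinite (D : Type*) [Category D] [Preadditive D] : Prop :=
  ∀ F : D ⥤ AddCommGrpCat.{u}, F.Additive → LocallyFiniteFunctor F

/-- `F` has a simple subfunctor. -/
def HasSimpleSubfunctor {D : Type*} [Category D] (F : D ⥤ AddCommGrpCat.{u}) : Prop :=
  ∃ S : Subfunctor F, (∃ (X : D) (x : F.obj X), x ∈ S.pt X ∧ x ≠ 0) ∧
    ∀ T : Subfunctor F, T.le S → (∀ X, T.pt X = ⊥) ∨ (∀ X, T.pt X = S.pt X)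

section Proof

open Opposite

variable {Λ : Type u} [Ring Λ] {P : ModuleCat.{u} Λ → Prop}

/-- View a morphism of the full subcategory as a linear map. -/
def toLin {A B : ObjectProperty.FullSubcategory P} (f : A ⟶ B) : A.obj →ₗ[Λ] B.obj := f.hom.hom

variable (F : (ObjectProperty.FullSubcategory P)ᵒᵖ ⥤ AddCommGrpCat.{u})

lemma val_eq_zero_of_isZero [F.Additive] {M : ObjectProperty.FullSubcategory P} (h : IsZero M.obj)
    (w : F.obj (op M)) : w = 0 := by
  have h1 : (𝟙 M : M ⟶ M) = 0 := InducedCategory.hom_ext (h.eq_of_src _ _)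
  calc w = F.map (𝟙 (op M)) w := by rw [F.map_id]; rfl
    _ = F.map ((0 : M ⟶ M).op) w := by rw [← h1]; rfl
    _ = 0 := by rw [op_zero, F.map_zero]; rfl

lemma detect [F.Additive] [IsArtinianRing Λ] (hsub : IsSubcat Λ P) (T : Subfunctor F)
    (M0 : ObjectProperty.FullSubcategory P) (w0 : F.obj (op M0))
    (hmem : w0 ∈ T.pt (op M0)) (hw0 : w0 ≠ 0) :
    ∃ (Z : ObjectProperty.FullSubcategory P) (z : F.obj (op Z)),
      Indecomposable Z.obj ∧ z ∈ T.pt (op Z) ∧ z ≠ 0 := by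
  by_contra hno
  push_neg at hno
  classical
  have step : ∀ (N : ObjectProperty.FullSubcategory P) (e : N ⟶ M0) (w : F.obj (op N)),
      w ∈ T.pt (op N) → w ≠ 0 → Function.Injective (toLin e) →
      ∃ (N' : ObjectProperty.FullSubcategory P) (e' : N' ⟶ M0) (w' : F.obj (op N')),
        w' ∈ T.pt (op N') ∧ w' ≠ 0 ∧ Function.Injective (toLin e') ∧
        LinearMap.range (toLin e') < LinearMap.range (toLin e) := by
    intro N e w hwT hw hinj
    have hNz : ¬ IsZero N.obj := fun h => hw (val_eq_zero_of_isZero F h w)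
    have hNind : ¬ Indecomposable N.obj := fun h => hw (hno N w h hwT)
    rw [Indecomposable] at hNind
    push_neg at hNind
    obtain ⟨A, B, eiso, hA, hB⟩ := hNind hNz
    -- the asymmetric construction
    have key : ∀ (A' : ObjectProperty.FullSubcategory P) (B : ModuleCat.{u} Λ)
        (i₁ : A'.obj ⟶ N.obj) (p₁ : N.obj ⟶ A'.obj) (i₂ : B ⟶ N.obj) (p₂ : N.obj ⟶ B),
        i₁ ≫ p₁ = 𝟙 A'.obj → i₂ ≫ p₂ = 𝟙 B → i₁ ≫ p₂ = 0 → ¬ IsZero B →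
        F.map (ObjectProperty.homMk i₁ : A' ⟶ N).op w ≠ 0 →
        ∃ (N' : ObjectProperty.FullSubcategory P) (e' : N' ⟶ M0) (w' : F.obj (op N')),
          w' ∈ T.pt (op N') ∧ w' ≠ 0 ∧ Function.Injective (toLin e') ∧
          LinearMap.range (toLin e') < LinearMap.range (toLin e) := by
      intro A' B i₁ p₁ i₂ p₂ h11 h22 h12 hBz hwA
      have hretr : ∀ a, p₁ (i₁ a) = a := fun a => ConcreteCategory.congr_hom h11 a
      have hi₁inj : Function.Injective i₁ := fun a b hab => by
        rw [← hretr a, ← hretr b, hab]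
      have hkill : ∀ a, p₂ (i₁ a) = 0 := fun a => ConcreteCategory.congr_hom h12 a
      have hretr2 : ∀ b₀, p₂ (i₂ b₀) = b₀ := fun b₀ => ConcreteCategory.congr_hom h22 b₀
      obtain ⟨b, hb⟩ : ∃ b : B, b ≠ 0 := by
        by_contra hc
        push_neg at hc
        haveI : Subsingleton (B : Type u) := subsingleton_of_forall_eq 0 hc
        exact hBz (ModuleCat.isZero_of_subsingleton _)
      refine ⟨A', (ObjectProperty.homMk i₁ : A' ⟶ N) ≫ e, F.map (ObjectProperty.homMk i₁ : A' ⟶ N).op w,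
        T.map_mem _ _ hwT, hwA, ?_, ?_⟩
      · intro a b hab
        have hab' : toLin e (i₁ a) = toLin e (i₁ b) := hab
        exact hi₁inj (hinj hab')
      · rw [SetLike.lt_iff_le_and_exists]
        constructor
        · rintro x ⟨a, rfl⟩
          exact ⟨i₁ a, rfl⟩
        · refine ⟨toLin e (i₂ b), ⟨i₂ b, rfl⟩, ?_⟩
          rintro ⟨a, ha⟩
          have ha' : toLin e (i₁ a) = toLin e (i₂ b) := ha
          have : i₁ a = i₂ b := hinj ha'
          apply hb
          rw [← hretr2 b, ← this, hkill]
    -- the two components of `w`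
    set i₁ : A ⟶ N.obj := biprod.inl ≫ eiso.inv with hi₁
    set p₁ : N.obj ⟶ A := eiso.hom ≫ biprod.fst with hp₁
    set i₂ : B ⟶ N.obj := biprod.inr ≫ eiso.inv with hi₂
    set p₂ : N.obj ⟶ B := eiso.hom ≫ biprod.snd with hp₂
    have h11 : i₁ ≫ p₁ = 𝟙 A := by simp [hi₁, hp₁]
    have h22 : i₂ ≫ p₂ = 𝟙 B := by simp [hi₂, hp₂]
    have h12 : i₁ ≫ p₂ = 0 := by simp [hi₁, hp₂]
    have h21 : i₂ ≫ p₁ = 0 := by simp [hi₂, hp₁]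
    have hPA : P A := hsub.summand_closed N.property ⟨i₁, p₁, h11⟩
    have hPB : P B := hsub.summand_closed N.property ⟨i₂, p₂, h22⟩
    have htot : p₁ ≫ i₁ + p₂ ≫ i₂ = 𝟙 N.obj := by
      have h := biprod.total (X := A) (Y := B)
      have h2 : eiso.hom ≫ (biprod.fst ≫ biprod.inl + biprod.snd ≫ biprod.inr) ≫ eiso.inv
          = 𝟙 N.obj := by rw [h, Category.id_comp, Iso.hom_inv_id]
      rw [← h2, Preadditive.add_comp, Preadditive.comp_add, hi₁, hp₁, hi₂, hp₂]
      simp only [Category.assoc]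
    set A' : ObjectProperty.FullSubcategory P := ⟨A, hPA⟩ with hA'
    set B' : ObjectProperty.FullSubcategory P := ⟨B, hPB⟩ with hB'
    let ι₁ : A' ⟶ N := ObjectProperty.homMk i₁
    let π₁ : N ⟶ A' := ObjectProperty.homMk p₁
    let ι₂ : B' ⟶ N := ObjectProperty.homMk i₂
    let π₂ : N ⟶ B' := ObjectProperty.homMk p₂
    have htot' : π₁ ≫ ι₁ + π₂ ≫ ι₂ = 𝟙 N := InducedCategory.hom_ext htot
    have hdecomp : w = F.map π₁.op (F.map ι₁.op w) + F.map π₂.op (F.map ι₂.op w) := by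
      conv_lhs => rw [show w = F.map (𝟙 (op N)) w by rw [F.map_id]; rfl]
      rw [show (𝟙 (op N) : op N ⟶ op N) = ((𝟙 N : N ⟶ N)).op from rfl, ← htot']
      rw [op_add, F.map_add, AddCommGrpCat.hom_add_apply]
      congr 1
      · rw [show ((π₁ ≫ ι₁ : N ⟶ N)).op = ι₁.op ≫ π₁.op from rfl]
        rw [F.map_comp]; rfl
      · rw [show ((π₂ ≫ ι₂ : N ⟶ N)).op = ι₂.op ≫ π₂.op from rfl]
        rw [F.map_comp]; rfl
    by_cases hA0 : F.map ι₁.op w = 0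
    · have hB0 : F.map ι₂.op w ≠ 0 := by
        intro h
        apply hw
        rw [hdecomp, hA0, h, map_zero, map_zero, add_zero]
      exact key B' A i₂ p₂ i₁ p₁ h22 h11 h21 hA hB0
    · exact key A' B i₁ p₁ i₂ p₂ h11 h22 h12 hB hA0
  -- build an infinite strictly descending chain of submodules of `M0`
  haveI : Module.Finite Λ M0.obj := hsub.fg _ M0.property
  haveI : IsArtinian Λ M0.obj := inferInstance
  let Bad : Type _ := {q : Σ N : ObjectProperty.FullSubcategory P, (N ⟶ M0) × F.obj (op N) //
    q.2.2 ∈ T.pt (op q.1) ∧ q.2.2 ≠ 0 ∧ Function.Injective (toLin q.2.1)}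
  have hstep : ∀ q : Bad, ∃ q' : Bad,
      LinearMap.range (toLin q'.1.2.1) < LinearMap.range (toLin q.1.2.1) := by
    rintro ⟨⟨N, e, w⟩, hwT, hw, hinj⟩
    obtain ⟨N', e', w', h1, h2, h3, h4⟩ := step N e w hwT hw hinj
    exact ⟨⟨⟨N', e', w'⟩, h1, h2, h3⟩, h4⟩
  have hq0 : Function.Injective (toLin (𝟙 M0)) := fun a b h => by simpa [toLin] using h
  let seq : ℕ → Bad := fun n =>
    Nat.rec ⟨⟨M0, 𝟙 M0, w0⟩, hmem, hw0, hq0⟩ (fun _ q => (hstep q).choose) n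
  have hlt : ∀ n, LinearMap.range (toLin (seq (n+1)).1.2.1)
      < LinearMap.range (toLin (seq n).1.2.1) := fun n => (hstep (seq n)).choose_spec
  have wf : WellFounded ((· < ·) : Submodule Λ M0.obj → Submodule Λ M0.obj → Prop) :=
    (inferInstance : IsArtinian Λ M0.obj).wf
  obtain ⟨m, hmem', hmin⟩ :=
    wf.has_min (Set.range fun n => LinearMap.range (toLin (seq n).1.2.1)) ⟨_, ⟨0, rfl⟩⟩
  obtain ⟨n, rfl⟩ := hmem'
  exact hmin _ ⟨n + 1, rfl⟩ (hlt n)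

lemma exists_terminal [F.Additive] [IsArtinianRing Λ] (hsub : IsSubcat Λ P)
    (hart : HomChainsArtinian P)
    (Y0 : ObjectProperty.FullSubcategory P) (y0 : F.obj (op Y0)) (hY0 : Indecomposable Y0.obj)
    (hy0 : y0 ≠ 0) :
    ∃ (Y : ObjectProperty.FullSubcategory P) (y : F.obj (op Y)), Indecomposable Y.obj ∧ y ≠ 0 ∧
      ∀ (Z : ObjectProperty.FullSubcategory P) (f : Z ⟶ Y), Indecomposable Z.obj →
        F.map f.op y ≠ 0 → IsIso f := by
  by_contra hno
  push_neg at hno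
  let St := {q : Σ Y : ObjectProperty.FullSubcategory P, F.obj (op Y) // Indecomposable q.1.obj ∧ q.2 ≠ 0}
  have hstep : ∀ q : St, ∃ (q' : St) (f : q'.1.1 ⟶ q.1.1),
      ¬ IsIso f ∧ F.map f.op q.1.2 = q'.1.2 := by
    rintro ⟨⟨Y, y⟩, hind, hy⟩
    obtain ⟨Z, f, hZ, hf0, hfni⟩ := hno Y y hind hy
    exact ⟨⟨⟨Z, F.map f.op y⟩, hZ, hf0⟩, f, hfni, rfl⟩
  let seq : ℕ → St := fun n => Nat.rec ⟨⟨Y0, y0⟩, hY0, hy0⟩ (fun _ q => (hstep q).choose) n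
  let X : ℕ → ObjectProperty.FullSubcategory P := fun n => (seq n).1.1
  have hXind : ∀ n, Indecomposable (X n).obj := fun n => (seq n).2.1
  let g : ∀ n, X (n + 1) ⟶ X n := fun n => (hstep (seq n)).choose_spec.choose
  have hgni : ∀ n, ¬ IsIso (g n) := fun n => (hstep (seq n)).choose_spec.choose_spec.1
  have hgval : ∀ n, F.map (g n).op (seq n).1.2 = (seq (n+1)).1.2 :=
    fun n => (hstep (seq n)).choose_spec.choose_spec.2
  have hcomp : ∀ n, F.map (chainCompDown g n).op (seq 0).1.2 = (seq n).1.2 := by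
    intro n
    induction n with
    | zero =>
      rw [show chainCompDown g 0 = 𝟙 (X 0) from rfl,
        show (𝟙 (X 0) : X 0 ⟶ X 0).op = 𝟙 (op (X 0)) from rfl, F.map_id]
      simp
    | succ n ih =>
      have h2 : F.map ((g n ≫ chainCompDown g n).op) (seq 0).1.2
          = F.map ((g n).op) (F.map ((chainCompDown g n).op) (seq 0).1.2) := by
        rw [op_comp, F.map_comp]; rfl
      rw [show chainCompDown g (n+1) = g n ≫ chainCompDown g n from rfl, h2, ih, hgval]
  have hne : ∀ n, chainCompDown g n ≠ 0 := by
    intro n h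
    apply (seq n).2.2
    rw [← hcomp n, h, op_zero, F.map_zero]
    rfl
  obtain ⟨n, hn⟩ := hart X hXind g hne
  exact hgni n (hn n le_rfl)

end Proof

/-- Let `Λ` be left artinian and `𝒳` a subcategory of `Λ`-mod. If any
family of homomorphisms between indecomposable modules in `𝒳` is both noetherian and
artinian, then every non-zero `𝒳`-module has a simple subfunctor. -/
theorem statement7 {Λ : Type u} [Ring Λ] [IsArtinianRing Λ]
    (P : ModuleCat.{u} Λ → Prop) (hsub : IsSubcat Λ P)
    (hnoeth : HomChainsNoetherian P) (hart : HomChainsArtinian P) :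
    ∀ F : (ObjectProperty.FullSubcategory P)ᵒᵖ ⥤ AddCommGrpCat.{u}, F.Additive →
      (∃ (X : (ObjectProperty.FullSubcategory P)ᵒᵖ) (x : F.obj X), x ≠ 0) →
      HasSimpleSubfunctor F := by
  intro F hAdd hex
  haveI := hAdd
  obtain ⟨X0, x0, hx0⟩ := hex
  let Ttop : Subfunctor F := ⟨fun _ => ⊤, fun _ _ _ => AddSubgroup.mem_top _⟩
  obtain ⟨Y0, y0, hY0, -, hy0⟩ :=
    detect F hsub Ttop X0.unop x0 (AddSubgroup.mem_top _) hx0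
  obtain ⟨Y, y, hYind, hy, hterm⟩ := exists_terminal F hsub hart Y0 y0 hY0 hy0
  refine ⟨{ pt := fun V =>
            { carrier := {v | ∃ φ : Opposite.op Y ⟶ V, F.map φ y = v}
              zero_mem' := ⟨0, by rw [F.map_zero]; rfl⟩
              add_mem' := ?_
              neg_mem' := ?_ }
            map_mem := ?_ },
        ⟨Opposite.op Y, y, ⟨𝟙 _, by rw [F.map_id]; rfl⟩, hy⟩, ?_⟩
  · rintro a b ⟨φ, rfl⟩ ⟨ψ, rfl⟩
    exact ⟨φ + ψ, by rw [F.map_add, AddCommGrpCat.hom_add_apply]⟩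
  · rintro a ⟨φ, rfl⟩
    exact ⟨-φ, by rw [F.map_neg]; rfl⟩
  · rintro V V' ψ v ⟨φ, rfl⟩
    exact ⟨φ ≫ ψ, by rw [F.map_comp]; rfl⟩
  · intro T hTle
    by_cases hbot : ∀ V, T.pt V = ⊥
    · exact Or.inl hbot
    · right
      push_neg at hbot
      obtain ⟨V, hV⟩ := hbot
      obtain ⟨w, hwT, hw0⟩ : ∃ w, w ∈ T.pt V ∧ w ≠ 0 := by
        by_contra h
        push_neg at h
        apply hV
        ext v
        simp only [AddSubgroup.mem_bot]
        exact ⟨fun hv => h v hv, fun hv => hv ▸ (T.pt V).zero_mem⟩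
      obtain ⟨Z, z, hZind, hzT, hz0⟩ := detect F hsub T V.unop w hwT hw0
      obtain ⟨φ, hφ⟩ := hTle _ hzT
      have hiso : IsIso φ.unop := by
        refine hterm Z φ.unop hZind ?_
        show F.map φ y ≠ 0
        rw [hφ]
        exact hz0
      have hcomp : φ ≫ (inv φ.unop).op = 𝟙 (Opposite.op Y) := by
        have h := IsIso.inv_hom_id φ.unop
        calc φ ≫ (inv φ.unop).op = (inv φ.unop ≫ φ.unop).op := rfl
          _ = (𝟙 Y).op := by rw [h]
          _ = 𝟙 (Opposite.op Y) := rfl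
      have he : F.map ((inv φ.unop).op) z = y := by
        rw [← hφ]
        calc F.map ((inv φ.unop).op) (F.map φ y)
            = F.map (φ ≫ (inv φ.unop).op) y := by rw [F.map_comp]; rfl
          _ = y := by rw [hcomp, F.map_id]; rfl
      have hyT : y ∈ T.pt (Opposite.op Y) := by
        have := T.map_mem ((inv φ.unop).op) z hzT
        rwa [he] at this
      intro V'
      refine le_antisymm (hTle V') ?_
      rintro v ⟨ψ, rfl⟩
      exact T.map_mem ψ y hyT

end Paper
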